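/- Let A be a maximal intersecting family of (k−t)-sets and F a closed intersecting family CIF(k,t), with disjoint point sets. Then F ∪ (A ⊛ F^⊤) is a maximal intersecting family of k-sets. -/
import Mathlib


open Finset

variable {α : Type*} {β : Type*}

/-- `C` is a blocking set of the family `F`: it meets every block of `F`. -/
def IsBlocking (F : Set (Finset α)) (C : Finset α) : Prop :=
  ∀ B ∈ F, ∃ x ∈ B, x ∈ C

/-- The transversal number `τ(F)`: the minimum size of a (finite) blocking set. -/
noncomputable def tau (F : Set (Finset α)) : ℕ :=
  sInf {n | ∃ C : Finset α, C.card = n ∧ IsBlocking F C}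

/-- The family `F^⊤` of transversals, i.e. minimum-size blocking sets of `F`. -/
noncomputable def transversals (F : Set (Finset α)) : Set (Finset α) :=
  {C | IsBlocking F C ∧ C.card = tau F}

/-- A family is intersecting if any two of its blocks meet. -/
def FamIntersecting (F : Set (Finset α)) : Prop :=
  ∀ A ∈ F, ∀ B ∈ F, ∃ x ∈ A, x ∈ B

/-- A family is `k`-uniform if all its blocks have size `k`. -/
def FamUniform (F : Set (Finset α)) (k : ℕ) : Prop :=
  ∀ B ∈ F, B.card = k

/-- `F` has a finite blocking set (τ(F) < ∞). -/
def HasBlocking (F : Set (Finset α)) : Prop :=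
  ∃ C : Finset α, IsBlocking F C

/-- Maximal intersecting family of `k`-sets: uniform, τ < ∞ and `F = F^⊤`. -/
noncomputable def MIF (F : Set (Finset α)) (k : ℕ) : Prop :=
  FamUniform F k ∧ HasBlocking F ∧ F = transversals F

/-- Closed intersecting family `CIF(k,t)`: a `k`-uniform intersecting family with
`τ(F) = t ≤ k - 1` and `F = (F ∪ F^⊤)^⊤`. -/
noncomputable def CIF (F : Set (Finset α)) (k t : ℕ) : Prop :=
  FamUniform F k ∧ FamIntersecting F ∧ tau F = t ∧ t ≤ k - 1 ∧
    F = transversals (F ∪ transversals F)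

/-- The point set of a family. -/
def pts (F : Set (Finset α)) : Set α := ⋃ B ∈ F, (B : Set α)

/-- `G ⊛ H`: all unions `A ∪ B` with `A ∈ G`, `B ∈ H` (for point-disjoint families
these are disjoint unions). -/
def star [DecidableEq α] (G H : Set (Finset α)) : Set (Finset α) :=
  {C | ∃ A ∈ G, ∃ B ∈ H, C = A ∪ B}

lemma isBlocking_subset {F G : Set (Finset α)} {C : Finset α}
    (h : IsBlocking G C) (hFG : F ⊆ G) : IsBlocking F C :=
  fun B hB => h B (hFG hB)

lemma tau_le_card {F : Set (Finset α)} {C : Finset α} (h : IsBlocking F C) :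
    tau F ≤ C.card :=
  Nat.sInf_le ⟨C, rfl, h⟩

lemma exists_transversal {F : Set (Finset α)} (h : HasBlocking F) :
    ∃ C, C ∈ transversals F := by
  obtain ⟨C, hC⟩ := h
  have hne : {n | ∃ C : Finset α, C.card = n ∧ IsBlocking F C}.Nonempty :=
    ⟨C.card, C, rfl, hC⟩
  obtain ⟨D, hD1, hD2⟩ := Nat.sInf_mem hne
  exact ⟨D, hD2, hD1⟩

lemma mem_pts {F : Set (Finset α)} {B : Finset α} (hB : B ∈ F) {x : α} (hx : x ∈ B) :
    x ∈ pts F :=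
  Set.mem_biUnion hB (Finset.mem_coe.2 hx)

lemma transversal_subset_pts [DecidableEq α] {F : Set (Finset α)} {T : Finset α}
    (hT : T ∈ transversals F) {y : α} (hy : y ∈ T) : y ∈ pts F := by
  by_contra hyp
  have hb : IsBlocking F (T.erase y) := by
    intro B hB
    obtain ⟨x, hxB, hxT⟩ := hT.1 B hB
    refine ⟨x, hxB, Finset.mem_erase.2 ⟨?_, hxT⟩⟩
    rintro rfl
    exact hyp (mem_pts hB hxB)
  have h1 := tau_le_card hb
  rw [Finset.card_erase_of_mem hy] at h1
  have h2 := hT.2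
  have hpos : 0 < T.card := Finset.card_pos.2 ⟨y, hy⟩
  omega

lemma tau_empty : tau (∅ : Set (Finset α)) = 0 :=
  Nat.le_antisymm
    (Nat.sInf_le ⟨∅, Finset.card_empty, fun B hB => absurd hB (Set.notMem_empty B)⟩)
    (Nat.zero_le _)

lemma transversals_empty : transversals (∅ : Set (Finset α)) = {∅} := by
  ext C
  simp [transversals, IsBlocking, tau_empty, Finset.card_eq_zero, Set.mem_singleton_iff]

theorem stmt_4 [DecidableEq α] (A F : Set (Finset α)) (k t : ℕ)
    (hA : MIF A (k - t)) (hF : CIF F k t)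
    (hd : Disjoint (pts A) (pts F)) :
    MIF (F ∪ star A (transversals F)) k := by
  classical
  obtain ⟨hAu, hAb, hAc⟩ := hA
  obtain ⟨hFu, hFi, hFt, hkt, hFc⟩ := hF
  -- A has a transversal, hence a member; tau A = k - t
  obtain ⟨A0, hA0⟩ := exists_transversal hAb
  have hA0A : A0 ∈ A := by rw [hAc]; exact hA0
  have htA : tau A = k - t := by rw [← hA0.2]; exact hAu A0 hA0A
  by_cases hFe : F = ∅
  · -- degenerate case: F empty, t = 0, the family is just A
    subst hFe
    have ht0 : t = 0 := by rw [← hFt]; exact tau_empty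
    have hG : (∅ : Set (Finset α)) ∪ star A (transversals (∅ : Set (Finset α))) = A := by
      rw [transversals_empty, Set.empty_union]
      ext C
      constructor
      · rintro ⟨A', hA', B, hB, rfl⟩
        rw [Set.mem_singleton_iff] at hB
        subst hB
        simpa using hA'
      · intro hC
        exact ⟨C, hC, ∅, rfl, by simp⟩
    rw [hG]
    subst ht0
    exact ⟨by simpa using hAu, hAb, hAc⟩
  -- main case: F nonempty
  obtain ⟨B0, hB0⟩ := Set.nonempty_iff_ne_empty.mpr hFe
  have hB0T : B0 ∈ transversals (F ∪ transversals F) := by rw [← hFc]; exact hB0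
  have tauFT : tau (F ∪ transversals F) = k := by
    rw [← hB0T.2]; exact hFu B0 hB0
  have hAint : ∀ A' ∈ A, IsBlocking A A' := by
    intro A' hA'
    rw [hAc] at hA'
    exact hA'.1
  -- transversals F have card t
  have hTcard : ∀ T' ∈ transversals F, T'.card = t := by
    intro T' hT'
    rw [hT'.2, hFt]
  set G := F ∪ star A (transversals F) with hGdef
  -- every member of G is a blocking set of G
  have hGblock : ∀ C ∈ G, IsBlocking G C := by
    rintro C (hCF | ⟨A', hA', T', hT', rfl⟩) D (hDF | ⟨A'', hA'', T'', hT'', rfl⟩)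
    · exact hFi D hDF C hCF
    · obtain ⟨x, hx1, hx2⟩ := hT''.1 C hCF
      exact ⟨x, Finset.mem_union_right _ hx2, hx1⟩
    · obtain ⟨x, hx1, hx2⟩ := hT'.1 D hDF
      exact ⟨x, hx1, Finset.mem_union_right _ hx2⟩
    · obtain ⟨x, hx1, hx2⟩ := hAint A' hA' A'' hA''
      exact ⟨x, Finset.mem_union_left _ hx1, Finset.mem_union_left _ hx2⟩
  -- uniformity
  have hdisj : ∀ A' ∈ A, ∀ T' ∈ transversals F, Disjoint A' T' := by
    intro A' hA' T' hT'
    refine Finset.disjoint_left.2 fun {x} hxA hxT => ?_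
    exact Set.disjoint_left.1 hd (mem_pts hA' hxA) (transversal_subset_pts hT' hxT)
  have hGu : FamUniform G k := by
    rintro B (hBF | ⟨A', hA', T', hT', rfl⟩)
    · exact hFu B hBF
    · rw [Finset.card_union_of_disjoint (hdisj A' hA' T' hT'), hAu A' hA',
        hTcard T' hT']
      omega
  -- the key counting lemma
  have key : ∀ C : Finset α, IsBlocking G C → k ≤ C.card ∧ (C.card = k → C ∈ G) := by
    intro C hC
    set Ca := C.filter (fun x => x ∈ pts A) with hCa
    set Cf := C.filter (fun x => x ∉ pts A) with hCf
    have hsplit : Ca.card + Cf.card = C.card :=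
      Finset.card_filter_add_card_filter_not _
    have hCunion : Ca ∪ Cf = C := Finset.filter_union_filter_not_eq _ C
    have hCfF : IsBlocking F Cf := by
      intro B hB
      obtain ⟨x, hxB, hxC⟩ := hC B (Or.inl hB)
      refine ⟨x, hxB, Finset.mem_filter.2 ⟨hxC, ?_⟩⟩
      exact fun hxA => Set.disjoint_left.1 hd hxA (mem_pts hB hxB)
    by_cases hca : IsBlocking A Ca
    · -- Ca blocks A, Cf blocks F
      have h1 : k - t ≤ Ca.card := htA ▸ tau_le_card hca
      have h2 : t ≤ Cf.card := hFt ▸ tau_le_card hCfF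
      constructor
      · omega
      · intro hk
        have hCac : Ca.card = k - t := by omega
        have hCfc : Cf.card = t := by omega
        have hCaA : Ca ∈ A := by
          rw [hAc]
          exact ⟨hca, by rw [hCac, htA]⟩
        have hCfT : Cf ∈ transversals F := ⟨hCfF, by rw [hCfc, hFt]⟩
        right
        exact ⟨Ca, hCaA, Cf, hCfT, hCunion.symm⟩
    · -- some A' ∈ A is missed by C, so C blocks transversals F as well
      rw [IsBlocking] at hca
      push_neg at hca
      obtain ⟨A', hA', hA'miss⟩ := hca
      have hCfFT : IsBlocking (F ∪ transversals F) Cf := by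
        rintro B (hBF | hBT)
        · exact hCfF B hBF
        · obtain ⟨x, hx1, hx2⟩ := hC (A' ∪ B) (Or.inr ⟨A', hA', B, hBT, rfl⟩)
          rcases Finset.mem_union.1 hx1 with hxA | hxB
          · exact absurd (Finset.mem_filter.2 ⟨hx2, mem_pts hA' hxA⟩) (by
              intro hmem
              exact hA'miss x hxA hmem)
          · refine ⟨x, hxB, Finset.mem_filter.2 ⟨hx2, ?_⟩⟩
            exact fun hxA =>
              Set.disjoint_left.1 hd hxA (transversal_subset_pts hBT hxB)
      have h1 : k ≤ Cf.card := tauFT ▸ tau_le_card hCfFT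
      constructor
      · omega
      · intro hk
        have hCfc : Cf.card = k := by omega
        have hCac : Ca.card = 0 := by omega
        have hCaE : Ca = ∅ := Finset.card_eq_zero.1 hCac
        have hCeq : C = Cf := by rw [← hCunion, hCaE, Finset.empty_union]
        left
        rw [hFc, hCeq]
        exact ⟨hCfFT, by rw [hCfc, tauFT]⟩
  -- tau G = k
  have hGb : HasBlocking G := ⟨B0, hGblock B0 (Or.inl hB0)⟩
  have htG : tau G = k := by
    refine Nat.le_antisymm ?_ ?_
    · have := tau_le_card (hGblock B0 (Or.inl hB0))
      rwa [hFu B0 hB0] at this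
    · refine le_csInf ⟨B0.card, B0, rfl, hGblock B0 (Or.inl hB0)⟩ ?_
      rintro n ⟨C, rfl, hCb⟩
      exact (key C hCb).1
  refine ⟨hGu, hGb, ?_⟩
  ext C
  constructor
  · intro hCG
    exact ⟨hGblock C hCG, by rw [hGu C hCG, htG]⟩
  · rintro ⟨hCb, hCc⟩
    exact (key C hCb).2 (by rw [hCc, htG])
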